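/- arXiv:2004.04319 — 4 statements merged into one kernel-verified Lean document; each statement's English description precedes it below -/
import Mathlib

section
/- Positive definiteness of the discrete H^{-1} form on mean-zero grid functions: Let φ be a grid function and η a grid function satisfying the discrete Neumann BC with -Δ_h η = φ at all interior cells. Then (φ,φ)_{-1} := ‖∇_h η‖^2 ≥ 0, and if ‖∇_h η‖^2 = 0 then φ_{i,j} = 0 for all i = 1,...,N_x, j = 1,...,N_y. -/
open Finset

/-- Discrete inner product `(f,g)_m` over interior cells `i = 1,...,Nx`, `j = 1,...,Ny`. -/
noncomputable def innerM (Nx Ny : ℕ) (hx hy : ℝ) (f g : ℕ → ℕ → ℝ) : ℝ :=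
  ∑ i ∈ Finset.Icc 1 Nx, ∑ j ∈ Finset.Icc 1 Ny, hx * hy * f i j * g i j

/-- Discrete inner product `(u,v)_x` for x-edge arrays; index `i` stands for `i + 1/2`. -/
noncomputable def innerX (Nx Ny : ℕ) (hx hy : ℝ) (u v : ℕ → ℕ → ℝ) : ℝ :=
  ∑ i ∈ Finset.Icc 1 (Nx - 1), ∑ j ∈ Finset.Icc 1 Ny, hx * hy * u i j * v i j

/-- Discrete inner product `(u,v)_y` for y-edge arrays; index `j` stands for `j + 1/2`. -/
noncomputable def innerY (Nx Ny : ℕ) (hx hy : ℝ) (u v : ℕ → ℕ → ℝ) : ℝ :=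
  ∑ i ∈ Finset.Icc 1 Nx, ∑ j ∈ Finset.Icc 1 (Ny - 1), hx * hy * u i j * v i j

/-- `[d_x g]_{i+1/2, j}`, stored at index `(i, j)`. -/
noncomputable def dX (hx : ℝ) (g : ℕ → ℕ → ℝ) : ℕ → ℕ → ℝ := fun i j => (g (i + 1) j - g i j) / hx

/-- `[d_y g]_{i, j+1/2}`, stored at index `(i, j)`. -/
noncomputable def dY (hy : ℝ) (g : ℕ → ℕ → ℝ) : ℕ → ℕ → ℝ := fun i j => (g i (j + 1) - g i j) / hy

/-- `[D_x w]_{i,j} = (w_{i+1/2,j} - w_{i-1/2,j})/h_x` for an x-edge array `w`. -/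
noncomputable def DX (hx : ℝ) (w : ℕ → ℕ → ℝ) : ℕ → ℕ → ℝ := fun i j => (w i j - w (i - 1) j) / hx

/-- `[D_y w]_{i,j} = (w_{i,j+1/2} - w_{i,j-1/2})/h_y` for a y-edge array `w`. -/
noncomputable def DY (hy : ℝ) (w : ℕ → ℕ → ℝ) : ℕ → ℕ → ℝ := fun i j => (w i j - w i (j - 1)) / hy

/-- Five-point discrete Laplacian `[Δ_h g]_{i,j}` (meaningful at interior cells). -/
noncomputable def lapH (hx hy : ℝ) (g : ℕ → ℕ → ℝ) : ℕ → ℕ → ℝ := fun i j =>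
  (g (i + 1) j - 2 * g i j + g (i - 1) j) / hx ^ 2 +
  (g i (j + 1) - 2 * g i j + g i (j - 1)) / hy ^ 2

/-- The discrete homogeneous Neumann boundary condition for a grid function. -/
noncomputable def NeumannBC (Nx Ny : ℕ) (g : ℕ → ℕ → ℝ) : Prop :=
  (∀ j ∈ Finset.Icc 1 Ny, g 0 j = g 1 j ∧ g (Nx + 1) j = g Nx j) ∧
  (∀ i ∈ Finset.Icc 1 Nx, g i 0 = g i 1 ∧ g i (Ny + 1) = g i Ny)

/-- Extension of interior data to ghost cells via the discrete Neumann BC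
(clamping of indices to the interior range). -/
noncomputable def extN (Nx Ny : ℕ) (u : ℕ → ℕ → ℝ) : ℕ → ℕ → ℝ := fun i j =>
  u (min (max i 1) Nx) (min (max j 1) Ny)

/-- `‖∇_h g‖² = (d_x g, d_x g)_x + (d_y g, d_y g)_y`. -/
noncomputable def gradSq (Nx Ny : ℕ) (hx hy : ℝ) (g : ℕ → ℕ → ℝ) : ℝ :=
  innerX Nx Ny hx hy (dX hx g) (dX hx g) + innerY Nx Ny hx hy (dY hy g) (dY hy g)

/-- `Δ_h² g`, where `Δ_h g` is extended to ghost cells via its own Neumann BC. -/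
noncomputable def lap2H (Nx Ny : ℕ) (hx hy : ℝ) (g : ℕ → ℕ → ℝ) : ℕ → ℕ → ℝ :=
  lapH hx hy (extN Nx Ny (lapH hx hy g))

/-- `Δ_h³ g`, where `Δ_h g`, `Δ_h² g` are extended to ghost cells via their own Neumann BC. -/
noncomputable def lap3H (Nx Ny : ℕ) (hx hy : ℝ) (g : ℕ → ℕ → ℝ) : ℕ → ℕ → ℝ :=
  lapH hx hy (extN Nx Ny (lap2H Nx Ny hx hy g))

/-- Discrete energy `E_1^h(g) = Σ h_x h_y F(g_{ij})` with `F(s) = s⁴/4`. -/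
noncomputable def E1h (Nx Ny : ℕ) (hx hy : ℝ) (g : ℕ → ℕ → ℝ) : ℝ :=
  ∑ i ∈ Finset.Icc 1 Nx, ∑ j ∈ Finset.Icc 1 Ny, hx * hy * (g i j ^ 4 / 4)

/-!
`‖∇_h η‖²` is a sum of squares with positive weights, hence nonnegative. If it vanishes, every
difference of `η` across an interior edge vanishes; the Neumann condition makes the differences
across the boundary edges vanish too, so each interior cell agrees with its four neighbours and
`φ = -Δ_h η` is zero there.
-/

section WeightedSums

variable {α β : Type*} {s : Finset α} {t : Finset β} {c : ℝ} {u : α → β → ℝ}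

theorem sum_sum_mul_mul_self_nonneg (hc : 0 ≤ c) :
    0 ≤ ∑ i ∈ s, ∑ j ∈ t, c * u i j * u i j :=
  sum_nonneg fun i _ => sum_nonneg fun j _ => by
    rw [mul_assoc]; exact mul_nonneg hc (mul_self_nonneg _)

theorem sum_sum_mul_mul_self_eq_zero_iff (hc : 0 < c) :
    ∑ i ∈ s, ∑ j ∈ t, c * u i j * u i j = 0 ↔ ∀ i ∈ s, ∀ j ∈ t, u i j = 0 := by
  have hterm : ∀ i j, 0 ≤ c * u i j * u i j := fun i j => by
    rw [mul_assoc]; exact mul_nonneg hc.le (mul_self_nonneg _)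
  rw [sum_eq_zero_iff_of_nonneg fun i _ => sum_nonneg fun j _ => hterm i j]
  refine forall₂_congr fun i _ => ?_
  rw [sum_eq_zero_iff_of_nonneg fun j _ => hterm i j]
  exact forall₂_congr fun j _ => by simp [mul_assoc, hc.ne']

end WeightedSums

section GridGradient

variable {Nx Ny : ℕ} {hx hy : ℝ} {g : ℕ → ℕ → ℝ}

theorem gradSq_nonneg (hxy : 0 ≤ hx * hy) : 0 ≤ gradSq Nx Ny hx hy g :=
  add_nonneg (sum_sum_mul_mul_self_nonneg hxy) (sum_sum_mul_mul_self_nonneg hxy)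

theorem gradSq_eq_zero_iff (hxy : 0 < hx * hy) :
    gradSq Nx Ny hx hy g = 0 ↔
      (∀ i ∈ Icc 1 (Nx - 1), ∀ j ∈ Icc 1 Ny, dX hx g i j = 0) ∧
        ∀ i ∈ Icc 1 Nx, ∀ j ∈ Icc 1 (Ny - 1), dY hy g i j = 0 := by
  rw [gradSq, innerX, innerY, add_eq_zero_iff_of_nonneg (sum_sum_mul_mul_self_nonneg hxy.le)
    (sum_sum_mul_mul_self_nonneg hxy.le)]
  exact and_congr (sum_sum_mul_mul_self_eq_zero_iff hxy) (sum_sum_mul_mul_self_eq_zero_iff hxy)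

theorem dX_eq_zero_iff (hx0 : hx ≠ 0) {i j : ℕ} : dX hx g i j = 0 ↔ g (i + 1) j = g i j := by
  simp [dX, hx0, sub_eq_zero]

theorem dY_eq_zero_iff (hy0 : hy ≠ 0) {i j : ℕ} : dY hy g i j = 0 ↔ g i (j + 1) = g i j := by
  simp [dY, hy0, sub_eq_zero]

theorem lapH_eq_zero_of_neighbors_eq {i j : ℕ}
    (hr : g (i + 1) j = g i j) (hl : g (i - 1) j = g i j)
    (ht : g i (j + 1) = g i j) (hb : g i (j - 1) = g i j) : lapH hx hy g i j = 0 := by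
  simp only [lapH, hr, hl, ht, hb]
  ring

end GridGradient

theorem succ_eq_and_pred_eq_of_neumann {f : ℕ → ℝ} {N : ℕ} (h0 : f 0 = f 1)
    (hN : f (N + 1) = f N) (hint : ∀ k ∈ Icc 1 (N - 1), f (k + 1) = f k)
    {i : ℕ} (hi : i ∈ Icc 1 N) : f (i + 1) = f i ∧ f (i - 1) = f i := by
  rw [mem_Icc] at hi
  have hsucc : ∀ k, 1 ≤ k → k ≤ N → f (k + 1) = f k := fun k hk1 hkN => by
    rcases hkN.eq_or_lt with rfl | hlt
    · exact hN
    · exact hint k (mem_Icc.2 ⟨hk1, by omega⟩)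
  refine ⟨hsucc i hi.1 hi.2, ?_⟩
  rcases hi.1.eq_or_lt with rfl | hlt
  · exact h0
  · obtain ⟨k, rfl⟩ : ∃ k, i = k + 1 := ⟨i - 1, by omega⟩
    exact (hsucc k (by omega) (by omega)).symm

theorem discrete_Hminus1_pos_def_general
    (Nx Ny : ℕ)
    (hx hy : ℝ) (hhx : 0 < hx) (hhy : 0 < hy)
    (φ η : ℕ → ℕ → ℝ)
    (hη : NeumannBC Nx Ny η)
    (hφ : ∀ i ∈ Finset.Icc 1 Nx, ∀ j ∈ Finset.Icc 1 Ny, -lapH hx hy η i j = φ i j) :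
    0 ≤ gradSq Nx Ny hx hy η ∧
    (gradSq Nx Ny hx hy η = 0 →
      ∀ i ∈ Finset.Icc 1 Nx, ∀ j ∈ Finset.Icc 1 Ny, φ i j = 0) := by
  have hxy : 0 < hx * hy := mul_pos hhx hhy
  refine ⟨gradSq_nonneg hxy.le, fun hzero i hi j hj => ?_⟩
  obtain ⟨hdX, hdY⟩ := (gradSq_eq_zero_iff hxy).1 hzero
  obtain ⟨hr, hl⟩ := succ_eq_and_pred_eq_of_neumann (f := fun k => η k j)
    (hη.1 j hj).1 (hη.1 j hj).2 (fun k hk => (dX_eq_zero_iff hhx.ne').1 (hdX k hk j hj)) hi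
  obtain ⟨ht, hb⟩ := succ_eq_and_pred_eq_of_neumann (f := fun k => η i k)
    (hη.2 i hi).1 (hη.2 i hi).2 (fun k hk => (dY_eq_zero_iff hhy.ne').1 (hdY i hi k hk)) hj
  rw [← hφ i hi j hj, lapH_eq_zero_of_neighbors_eq hr hl ht hb, neg_zero]

/-- Positive definiteness of the discrete `H⁻¹` form: if `η` satisfies the discrete
Neumann BC with `-Δ_h η = φ` at all interior cells, then
`(φ,φ)_{-1} = ‖∇_h η‖² ≥ 0`, and `‖∇_h η‖² = 0` forces `φ = 0` at all interior cells. -/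
theorem discrete_Hminus1_pos_def
    (Nx Ny : ℕ) (hNx : 1 ≤ Nx) (hNy : 1 ≤ Ny)
    (hx hy : ℝ) (hhx : 0 < hx) (hhy : 0 < hy)
    (φ η : ℕ → ℕ → ℝ)
    (hη : NeumannBC Nx Ny η)
    (hφ : ∀ i ∈ Finset.Icc 1 Nx, ∀ j ∈ Finset.Icc 1 Ny, -lapH hx hy η i j = φ i j) :
    0 ≤ gradSq Nx Ny hx hy η ∧
    (gradSq Nx Ny hx hy η = 0 →
      ∀ i ∈ Finset.Icc 1 Nx, ∀ j ∈ Finset.Icc 1 Ny, φ i j = 0) :=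
  discrete_Hminus1_pos_def_general Nx Ny hx hy hhx hhy φ η hη hφ
end

section
/- Theorem 2.1, mass conservation part (semi-discrete scheme): Let Δt > 0, M > 0, β > 0, and let ψ^n, ψ^{n+1}, φ^n, φ^{n+1}, μ^{n+1/2} be smooth functions on the closure of Ω satisfying ψ^{n+1} - ψ^n + βΔt ψ^{n+1/2} = MΔt Δμ^{n+1/2} in Ω and Δt ψ^{n+1/2} = φ^{n+1} - φ^n, where ψ^{n+1/2} = (ψ^{n+1} + ψ^n)/2, together with the boundary condition ∂_n μ^{n+1/2} = 0 on ∂Ω. Then (1 + (β/2)Δt) ∫_Ω ψ^{n+1} dx = (1 - (β/2)Δt) ∫_Ω ψ^n dx; consequently, if ∫_Ω ψ^n dx = 0 then ∫_Ω ψ^{n+1} dx = 0 and ∫_Ω φ^{n+1} dx = ∫_Ω φ^n dx. -/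
open MeasureTheory

/-- Integral over the rectangle `Ω = (0, Lx) × (0, Ly)`. -/
noncomputable def integ (Lx Ly : ℝ) (f : ℝ → ℝ → ℝ) : ℝ :=
  ∫ p in Set.Ioo (0 : ℝ) Lx ×ˢ Set.Ioo (0 : ℝ) Ly, f p.1 p.2

/-- The Laplacian `Δf = ∂²f/∂x² + ∂²f/∂y²` of a function of two real variables. -/
noncomputable def lapC (f : ℝ → ℝ → ℝ) : ℝ → ℝ → ℝ := fun x y =>
  iteratedDeriv 2 (fun t => f t y) x + iteratedDeriv 2 (fun t => f x t) y

/-- `|∇f|² = (∂f/∂x)² + (∂f/∂y)²`. -/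
noncomputable def gradSqC (f : ℝ → ℝ → ℝ) : ℝ → ℝ → ℝ := fun x y =>
  (deriv (fun t => f t y) x) ^ 2 + (deriv (fun t => f x t) y) ^ 2

/-- Homogeneous Neumann boundary condition `∂_n f = 0` on the boundary of
the rectangle `Ω = (0, Lx) × (0, Ly)`. -/
def NeumannC (Lx Ly : ℝ) (f : ℝ → ℝ → ℝ) : Prop :=
  (∀ y ∈ Set.Icc (0 : ℝ) Ly, deriv (fun t => f t y) 0 = 0 ∧ deriv (fun t => f t y) Lx = 0) ∧
  (∀ x ∈ Set.Icc (0 : ℝ) Lx, deriv (fun t => f x t) 0 = 0 ∧ deriv (fun t => f x t) Ly = 0)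

/-- Membership in the open rectangle `Ω = (0, Lx) × (0, Ly)`. -/
def InOmega (Lx Ly x y : ℝ) : Prop := x ∈ Set.Ioo (0 : ℝ) Lx ∧ y ∈ Set.Ioo (0 : ℝ) Ly

/-- Smoothness (on all of `ℝ²`, hence on the closure of `Ω`). -/
def SmoothCl (f : ℝ → ℝ → ℝ) : Prop := ContDiff ℝ (⊤ : ℕ∞) (fun p : ℝ × ℝ => f p.1 p.2)

open Set

/-- Partial derivative in the first variable. -/
noncomputable def pdx (f : ℝ → ℝ → ℝ) : ℝ → ℝ → ℝ := fun x y => deriv (fun t => f t y) x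

/-- Partial derivative in the second variable. -/
noncomputable def pdy (f : ℝ → ℝ → ℝ) : ℝ → ℝ → ℝ := fun x y => deriv (fun t => f x t) y

lemma smooth_pdx {f : ℝ → ℝ → ℝ} (hf : SmoothCl f) : SmoothCl (pdx f) := by
  have hG : ContDiff ℝ (⊤ : ℕ∞) (fun p : ℝ × ℝ => fderiv ℝ (fun q : ℝ × ℝ => f q.1 q.2) p (1, 0)) :=
    (hf.fderiv_right (by simp)).clm_apply contDiff_const
  have : (fun p : ℝ × ℝ => pdx f p.1 p.2) =
      fun p : ℝ × ℝ => fderiv ℝ (fun q : ℝ × ℝ => f q.1 q.2) p (1, 0) := by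
    funext p
    have hF := (hf.differentiable (by simp) (p.1, p.2)).hasFDerivAt
    have hline : HasDerivAt (fun t : ℝ => (t, p.2)) ((1 : ℝ), (0 : ℝ)) p.1 :=
      HasDerivAt.prodMk (hasDerivAt_id p.1) (hasDerivAt_const p.1 p.2)
    exact (hF.comp_hasDerivAt p.1 hline).deriv
  rw [SmoothCl, this]; exact hG

lemma smooth_pdy {f : ℝ → ℝ → ℝ} (hf : SmoothCl f) : SmoothCl (pdy f) := by
  have hG : ContDiff ℝ (⊤ : ℕ∞) (fun p : ℝ × ℝ => fderiv ℝ (fun q : ℝ × ℝ => f q.1 q.2) p (0, 1)) :=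
    (hf.fderiv_right (by simp)).clm_apply contDiff_const
  have : (fun p : ℝ × ℝ => pdy f p.1 p.2) =
      fun p : ℝ × ℝ => fderiv ℝ (fun q : ℝ × ℝ => f q.1 q.2) p (0, 1) := by
    funext p
    have hF := (hf.differentiable (by simp) (p.1, p.2)).hasFDerivAt
    have hline : HasDerivAt (fun t : ℝ => (p.1, t)) ((0 : ℝ), (1 : ℝ)) p.2 :=
      HasDerivAt.prodMk (hasDerivAt_const p.2 p.1) (hasDerivAt_id p.2)
    exact (hF.comp_hasDerivAt p.2 hline).deriv
  rw [SmoothCl, this]; exact hG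

lemma slice_x {f : ℝ → ℝ → ℝ} (hf : SmoothCl f) (y : ℝ) : ContDiff ℝ (⊤ : ℕ∞) (fun t => f t y) :=
  hf.comp (contDiff_id.prodMk contDiff_const)

lemma slice_y {f : ℝ → ℝ → ℝ} (hf : SmoothCl f) (x : ℝ) : ContDiff ℝ (⊤ : ℕ∞) (fun t => f x t) :=
  hf.comp (contDiff_const.prodMk contDiff_id)

lemma lapC_eq (f : ℝ → ℝ → ℝ) (x y : ℝ) :
    lapC f x y = pdx (pdx f) x y + pdy (pdy f) x y := by
  rw [lapC, iteratedDeriv_succ, iteratedDeriv_one, iteratedDeriv_succ, iteratedDeriv_one]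
  rfl

lemma integrable_of_smooth {f : ℝ → ℝ → ℝ} (hf : SmoothCl f) (Lx Ly : ℝ) :
    IntegrableOn (fun p : ℝ × ℝ => f p.1 p.2) (Ioo (0:ℝ) Lx ×ˢ Ioo (0:ℝ) Ly) :=
  (hf.continuous.continuousOn.integrableOn_compact
    ((isCompact_Icc (a := (0:ℝ)) (b := Lx)).prod
      (isCompact_Icc (a := (0:ℝ)) (b := Ly)))).mono_set
    (Set.prod_mono Ioo_subset_Icc_self Ioo_subset_Icc_self)

lemma integ_lapC_zero (Lx Ly : ℝ) (hLx : 0 < Lx) (hLy : 0 < Ly) {μ : ℝ → ℝ → ℝ}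
    (hμ : SmoothCl μ) (hbc : NeumannC Lx Ly μ) :
    integ Lx Ly (lapC μ) = 0 := by
  have hA : SmoothCl (pdx (pdx μ)) := smooth_pdx (smooth_pdx hμ)
  have hB : SmoothCl (pdy (pdy μ)) := smooth_pdy (smooth_pdy hμ)
  have hAi := integrable_of_smooth hA Lx Ly
  have hBi := integrable_of_smooth hB Lx Ly
  have hsplit : integ Lx Ly (lapC μ) =
      (∫ p in Ioo (0:ℝ) Lx ×ˢ Ioo (0:ℝ) Ly, pdx (pdx μ) p.1 p.2)
      + ∫ p in Ioo (0:ℝ) Lx ×ˢ Ioo (0:ℝ) Ly, pdy (pdy μ) p.1 p.2 := by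
    rw [integ, show (fun p : ℝ × ℝ => lapC μ p.1 p.2)
        = fun p : ℝ × ℝ => pdx (pdx μ) p.1 p.2 + pdy (pdy μ) p.1 p.2
      from funext fun p => lapC_eq μ p.1 p.2]
    exact integral_add hAi hBi
  have hTA : (∫ p in Ioo (0:ℝ) Lx ×ˢ Ioo (0:ℝ) Ly, pdx (pdx μ) p.1 p.2) = 0 := by
    have hswap : Integrable (Function.uncurry fun x y => pdx (pdx μ) x y)
        ((volume.restrict (Ioo (0:ℝ) Lx)).prod (volume.restrict (Ioo (0:ℝ) Ly))) := by
      rw [Measure.prod_restrict, ← Measure.volume_eq_prod ℝ ℝ]; exact hAi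
    have hzero : ∀ y ∈ Ioo (0:ℝ) Ly, (∫ x in Ioo (0:ℝ) Lx, pdx (pdx μ) x y) = 0 := by
      intro y hy
      have hdiff : ∀ x ∈ uIcc (0:ℝ) Lx, DifferentiableAt ℝ (fun t => pdx μ t y) x :=
        fun x _ => ((slice_x (smooth_pdx hμ) y).differentiable (by simp)) x
      have hint : IntervalIntegrable (deriv fun t => pdx μ t y) volume 0 Lx := by
        exact ((slice_x hA y).continuous).intervalIntegrable 0 Lx
      have h2 : (∫ x in (0:ℝ)..Lx, pdx (pdx μ) x y) = pdx μ Lx y - pdx μ 0 y :=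
        intervalIntegral.integral_deriv_eq_sub hdiff hint
      have hb := hbc.1 y (Ioo_subset_Icc_self hy)
      rw [← integral_Ioc_eq_integral_Ioo, ← intervalIntegral.integral_of_le hLx.le, h2]
      simp only [pdx]
      rw [hb.1, hb.2]; ring
    calc (∫ p in Ioo (0:ℝ) Lx ×ˢ Ioo (0:ℝ) Ly, pdx (pdx μ) p.1 p.2)
        = ∫ x in Ioo (0:ℝ) Lx, ∫ y in Ioo (0:ℝ) Ly, pdx (pdx μ) x y := by
          rw [Measure.volume_eq_prod ℝ ℝ]
          exact setIntegral_prod _ (by rw [← Measure.volume_eq_prod ℝ ℝ]; exact hAi)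
      _ = ∫ y in Ioo (0:ℝ) Ly, ∫ x in Ioo (0:ℝ) Lx, pdx (pdx μ) x y :=
          integral_integral_swap hswap
      _ = ∫ _ in Ioo (0:ℝ) Ly, (0:ℝ) := setIntegral_congr_fun measurableSet_Ioo hzero
      _ = 0 := by simp
  have hTB : (∫ p in Ioo (0:ℝ) Lx ×ˢ Ioo (0:ℝ) Ly, pdy (pdy μ) p.1 p.2) = 0 := by
    have hzero : ∀ x ∈ Ioo (0:ℝ) Lx, (∫ y in Ioo (0:ℝ) Ly, pdy (pdy μ) x y) = 0 := by
      intro x hx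
      have hdiff : ∀ y ∈ uIcc (0:ℝ) Ly, DifferentiableAt ℝ (fun t => pdy μ x t) y :=
        fun y _ => ((slice_y (smooth_pdy hμ) x).differentiable (by simp)) y
      have hint : IntervalIntegrable (deriv fun t => pdy μ x t) volume 0 Ly := by
        exact ((slice_y hB x).continuous).intervalIntegrable 0 Ly
      have h2 : (∫ y in (0:ℝ)..Ly, pdy (pdy μ) x y) = pdy μ x Ly - pdy μ x 0 :=
        intervalIntegral.integral_deriv_eq_sub hdiff hint
      have hb := hbc.2 x (Ioo_subset_Icc_self hx)
      rw [← integral_Ioc_eq_integral_Ioo, ← intervalIntegral.integral_of_le hLy.le, h2]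
      simp only [pdy]
      rw [hb.1, hb.2]; ring
    calc (∫ p in Ioo (0:ℝ) Lx ×ˢ Ioo (0:ℝ) Ly, pdy (pdy μ) p.1 p.2)
        = ∫ x in Ioo (0:ℝ) Lx, ∫ y in Ioo (0:ℝ) Ly, pdy (pdy μ) x y := by
          rw [Measure.volume_eq_prod ℝ ℝ]
          exact setIntegral_prod _ (by rw [← Measure.volume_eq_prod ℝ ℝ]; exact hBi)
      _ = ∫ _ in Ioo (0:ℝ) Lx, (0:ℝ) := setIntegral_congr_fun measurableSet_Ioo hzero
      _ = 0 := by simp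
  rw [hsplit, hTA, hTB]; ring

/-- Theorem 2.1, mass conservation part (semi-discrete scheme):
`(1 + (β/2)Δt) ∫_Ω ψ^{n+1} = (1 - (β/2)Δt) ∫_Ω ψ^n`; consequently, if
`∫_Ω ψ^n = 0` then `∫_Ω ψ^{n+1} = 0` and `∫_Ω φ^{n+1} = ∫_Ω φ^n`. -/
theorem semi_discrete_mass_conservation
    (Lx Ly : ℝ) (hLx : 0 < Lx) (hLy : 0 < Ly)
    (Δt M β : ℝ) (hΔt : 0 < Δt) (hM : 0 < M) (hβ : 0 < β)
    (ψn ψp φn φp μ : ℝ → ℝ → ℝ)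
    (hsm : SmoothCl ψn ∧ SmoothCl ψp ∧ SmoothCl φn ∧ SmoothCl φp ∧ SmoothCl μ)
    (heq1 : ∀ x y, InOmega Lx Ly x y →
      ψp x y - ψn x y + β * Δt * ((ψp x y + ψn x y) / 2) = M * Δt * lapC μ x y)
    (heq2 : ∀ x y, InOmega Lx Ly x y →
      Δt * ((ψp x y + ψn x y) / 2) = φp x y - φn x y)
    (hbc : NeumannC Lx Ly μ) :
    (1 + β / 2 * Δt) * integ Lx Ly ψp = (1 - β / 2 * Δt) * integ Lx Ly ψn ∧
    (integ Lx Ly ψn = 0 →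
      integ Lx Ly ψp = 0 ∧ integ Lx Ly φp = integ Lx Ly φn) := by
  obtain ⟨hψn, hψp, hφn, hφp, hμ⟩ := hsm
  have hIn := integrable_of_smooth hψn Lx Ly
  have hIp := integrable_of_smooth hψp Lx Ly
  have hIφn := integrable_of_smooth hφn Lx Ly
  have hIφp := integrable_of_smooth hφp Lx Ly
  have hSmeas : MeasurableSet (Ioo (0:ℝ) Lx ×ˢ Ioo (0:ℝ) Ly) :=
    measurableSet_Ioo.prod measurableSet_Ioo
  have hIlap := integrable_of_smooth (f := lapC μ)
    (by rw [SmoothCl, show (fun p : ℝ × ℝ => lapC μ p.1 p.2)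
          = fun p : ℝ × ℝ => pdx (pdx μ) p.1 p.2 + pdy (pdy μ) p.1 p.2
        from funext fun p => lapC_eq μ p.1 p.2]
        exact (smooth_pdx (smooth_pdx hμ)).add (smooth_pdy (smooth_pdy hμ))) Lx Ly
  have key : integ Lx Ly ψp - integ Lx Ly ψn
      + β * Δt * ((integ Lx Ly ψp + integ Lx Ly ψn) / 2) = 0 := by
    have h1 : (∫ p in Ioo (0:ℝ) Lx ×ˢ Ioo (0:ℝ) Ly,
        (ψp p.1 p.2 - ψn p.1 p.2 + β * Δt * ((ψp p.1 p.2 + ψn p.1 p.2) / 2)))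
        = ∫ p in Ioo (0:ℝ) Lx ×ˢ Ioo (0:ℝ) Ly, M * Δt * lapC μ p.1 p.2 := by
      refine setIntegral_congr_fun hSmeas fun p hp => ?_
      exact heq1 p.1 p.2 ⟨hp.1, hp.2⟩
    have h2 : (∫ p in Ioo (0:ℝ) Lx ×ˢ Ioo (0:ℝ) Ly, M * Δt * lapC μ p.1 p.2) = 0 := by
      have h0 := integ_lapC_zero Lx Ly hLx hLy hμ hbc
      rw [integ] at h0
      have e : (∫ p in Ioo (0:ℝ) Lx ×ˢ Ioo (0:ℝ) Ly, M * Δt * lapC μ p.1 p.2)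
          = M * Δt * ∫ p in Ioo (0:ℝ) Lx ×ˢ Ioo (0:ℝ) Ly, lapC μ p.1 p.2 :=
        integral_const_mul _ _
      rw [e, h0]; ring
    have hsub : Integrable (fun p : ℝ × ℝ => ψp p.1 p.2 - ψn p.1 p.2)
        (volume.restrict (Ioo (0:ℝ) Lx ×ˢ Ioo (0:ℝ) Ly)) := hIp.sub hIn
    have hmul : Integrable (fun p : ℝ × ℝ => β * Δt * ((ψp p.1 p.2 + ψn p.1 p.2) / 2))
        (volume.restrict (Ioo (0:ℝ) Lx ×ˢ Ioo (0:ℝ) Ly)) :=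
      ((hIp.add hIn).div_const 2).const_mul _
    have h3 : (∫ p in Ioo (0:ℝ) Lx ×ˢ Ioo (0:ℝ) Ly,
        (ψp p.1 p.2 - ψn p.1 p.2 + β * Δt * ((ψp p.1 p.2 + ψn p.1 p.2) / 2)))
        = integ Lx Ly ψp - integ Lx Ly ψn
          + β * Δt * ((integ Lx Ly ψp + integ Lx Ly ψn) / 2) := by
      have e1 : (∫ p in Ioo (0:ℝ) Lx ×ˢ Ioo (0:ℝ) Ly,
          (ψp p.1 p.2 - ψn p.1 p.2 + β * Δt * ((ψp p.1 p.2 + ψn p.1 p.2) / 2)))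
          = (∫ p in Ioo (0:ℝ) Lx ×ˢ Ioo (0:ℝ) Ly, (ψp p.1 p.2 - ψn p.1 p.2))
            + ∫ p in Ioo (0:ℝ) Lx ×ˢ Ioo (0:ℝ) Ly,
                β * Δt * ((ψp p.1 p.2 + ψn p.1 p.2) / 2) := integral_add hsub hmul
      have e2 : (∫ p in Ioo (0:ℝ) Lx ×ˢ Ioo (0:ℝ) Ly, (ψp p.1 p.2 - ψn p.1 p.2))
          = integ Lx Ly ψp - integ Lx Ly ψn := integral_sub hIp hIn
      have e3 : (∫ p in Ioo (0:ℝ) Lx ×ˢ Ioo (0:ℝ) Ly,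
          β * Δt * ((ψp p.1 p.2 + ψn p.1 p.2) / 2))
          = β * Δt * ∫ p in Ioo (0:ℝ) Lx ×ˢ Ioo (0:ℝ) Ly,
              ((ψp p.1 p.2 + ψn p.1 p.2) / 2) := integral_const_mul _ _
      have e4 : (∫ p in Ioo (0:ℝ) Lx ×ˢ Ioo (0:ℝ) Ly, ((ψp p.1 p.2 + ψn p.1 p.2) / 2))
          = (∫ p in Ioo (0:ℝ) Lx ×ˢ Ioo (0:ℝ) Ly, (ψp p.1 p.2 + ψn p.1 p.2)) / 2 :=
        integral_div _ _
      have e5 : (∫ p in Ioo (0:ℝ) Lx ×ˢ Ioo (0:ℝ) Ly, (ψp p.1 p.2 + ψn p.1 p.2))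
          = integ Lx Ly ψp + integ Lx Ly ψn := integral_add hIp hIn
      rw [e1, e2, e3, e4, e5]
    rw [← h3, h1, h2]
  have hφeq : Δt * ((integ Lx Ly ψp + integ Lx Ly ψn) / 2)
      = integ Lx Ly φp - integ Lx Ly φn := by
    have h1 : (∫ p in Ioo (0:ℝ) Lx ×ˢ Ioo (0:ℝ) Ly,
        Δt * ((ψp p.1 p.2 + ψn p.1 p.2) / 2))
        = ∫ p in Ioo (0:ℝ) Lx ×ˢ Ioo (0:ℝ) Ly, (φp p.1 p.2 - φn p.1 p.2) := by
      refine setIntegral_congr_fun hSmeas fun p hp => ?_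
      exact heq2 p.1 p.2 ⟨hp.1, hp.2⟩
    have e3 : (∫ p in Ioo (0:ℝ) Lx ×ˢ Ioo (0:ℝ) Ly,
        Δt * ((ψp p.1 p.2 + ψn p.1 p.2) / 2))
        = Δt * ∫ p in Ioo (0:ℝ) Lx ×ˢ Ioo (0:ℝ) Ly,
            ((ψp p.1 p.2 + ψn p.1 p.2) / 2) := integral_const_mul _ _
    have e4 : (∫ p in Ioo (0:ℝ) Lx ×ˢ Ioo (0:ℝ) Ly, ((ψp p.1 p.2 + ψn p.1 p.2) / 2))
        = (∫ p in Ioo (0:ℝ) Lx ×ˢ Ioo (0:ℝ) Ly, (ψp p.1 p.2 + ψn p.1 p.2)) / 2 :=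
      integral_div _ _
    have e5 : (∫ p in Ioo (0:ℝ) Lx ×ˢ Ioo (0:ℝ) Ly, (ψp p.1 p.2 + ψn p.1 p.2))
        = integ Lx Ly ψp + integ Lx Ly ψn := integral_add hIp hIn
    have e6 : (∫ p in Ioo (0:ℝ) Lx ×ˢ Ioo (0:ℝ) Ly, (φp p.1 p.2 - φn p.1 p.2))
        = integ Lx Ly φp - integ Lx Ly φn := integral_sub hIφp hIφn
    rw [e3, e4, e5, e6] at h1
    exact h1
  have hmain : (1 + β / 2 * Δt) * integ Lx Ly ψp
      = (1 - β / 2 * Δt) * integ Lx Ly ψn := by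
    have hr : (1 + β / 2 * Δt) * integ Lx Ly ψp - (1 - β / 2 * Δt) * integ Lx Ly ψn
        = integ Lx Ly ψp - integ Lx Ly ψn
          + β * Δt * ((integ Lx Ly ψp + integ Lx Ly ψn) / 2) := by ring
    linarith [key, hr]
  refine ⟨hmain, fun hzero => ?_⟩
  have hpos : (0:ℝ) < 1 + β / 2 * Δt := by positivity
  have hψp0 : integ Lx Ly ψp = 0 := by
    have := hmain
    rw [hzero, mul_zero] at this
    exact (mul_eq_zero.mp this).resolve_left (ne_of_gt hpos)
  refine ⟨hψp0, ?_⟩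
  rw [hψp0, hzero] at hφeq
  simp at hφeq
  linarith [hφeq]
end

section
/- Theorem 3.1, mass conservation part (fully discrete scheme): Let Δt > 0, M > 0, β > 0, and let Ψ^n, Ψ^{n+1}, Z^n, Z^{n+1}, W^{n+1/2} be grid functions with W^{n+1/2} satisfying the discrete Neumann BC, such that at all interior cells i = 1,...,N_x, j = 1,...,N_y: Ψ^{n+1} - Ψ^n + βΔt Ψ^{n+1/2} = MΔt Δ_h W^{n+1/2} and Δt Ψ^{n+1/2} = Z^{n+1} - Z^n, where Ψ^{n+1/2} = (Ψ^{n+1} + Ψ^n)/2. Then (1 + (β/2)Δt)(Ψ^{n+1}, 1)_m = (1 - (β/2)Δt)(Ψ^n, 1)_m; consequently, if (Ψ^n, 1)_m = 0 then (Ψ^{n+1}, 1)_m = 0 and (Z^{n+1}, 1)_m = (Z^n, 1)_m. -/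
open Finset

/-! The Laplacian term has zero mass: summing the second differences along each grid line
telescopes to the two boundary fluxes, which the Neumann condition makes vanish. Pairing the
scheme with `1` then leaves `(1 + βΔt/2)(Ψⁿ⁺¹, 1)_m - (1 - βΔt/2)(Ψⁿ, 1)_m = 0`, and the
`Z`-equation transfers zero mass of `Ψⁿ⁺¹/²` to conservation of the mass of `Z`. -/

theorem Finset.sum_Icc_second_diff (f : ℕ → ℝ) (N : ℕ) :
    ∑ i ∈ Icc 1 N, (f (i + 1) - 2 * f i + f (i - 1)) = (f (N + 1) - f N) - (f 1 - f 0) := by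
  induction N with
  | zero => simp
  | succ n ih =>
    rw [sum_Icc_succ_top (by omega), ih, Nat.add_sub_cancel]
    ring

section innerM

variable {Nx Ny : ℕ} {hx hy : ℝ}

theorem innerM_congr_left {f g : ℕ → ℕ → ℝ} (u : ℕ → ℕ → ℝ)
    (hfg : ∀ i ∈ Icc 1 Nx, ∀ j ∈ Icc 1 Ny, f i j = g i j) :
    innerM Nx Ny hx hy f u = innerM Nx Ny hx hy g u :=
  sum_congr rfl fun i hi => sum_congr rfl fun j hj => by rw [hfg i hi j hj]

theorem innerM_add_left (f g u : ℕ → ℕ → ℝ) :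
    innerM Nx Ny hx hy (fun i j => f i j + g i j) u =
      innerM Nx Ny hx hy f u + innerM Nx Ny hx hy g u := by
  simp only [innerM, ← sum_add_distrib]
  exact sum_congr rfl fun i _ => sum_congr rfl fun j _ => by ring

theorem innerM_sub_left (f g u : ℕ → ℕ → ℝ) :
    innerM Nx Ny hx hy (fun i j => f i j - g i j) u =
      innerM Nx Ny hx hy f u - innerM Nx Ny hx hy g u := by
  simp only [innerM, ← sum_sub_distrib]
  exact sum_congr rfl fun i _ => sum_congr rfl fun j _ => by ring

theorem innerM_const_mul_left (c : ℝ) (f u : ℕ → ℕ → ℝ) :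
    innerM Nx Ny hx hy (fun i j => c * f i j) u = c * innerM Nx Ny hx hy f u := by
  simp only [innerM, mul_sum]
  exact sum_congr rfl fun i _ => sum_congr rfl fun j _ => by ring

theorem innerM_lapH_one_eq_zero {W : ℕ → ℕ → ℝ} (hW : NeumannBC Nx Ny W) :
    innerM Nx Ny hx hy (lapH hx hy W) (fun _ _ => 1) = 0 := by
  have hxflux : ∀ j ∈ Icc 1 Ny,
      ∑ i ∈ Icc 1 Nx, (W (i + 1) j - 2 * W i j + W (i - 1) j) = 0 := fun j hj => by
    rw [sum_Icc_second_diff (W · j), (hW.1 j hj).1, (hW.1 j hj).2]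
    ring
  have hyflux : ∀ i ∈ Icc 1 Nx,
      ∑ j ∈ Icc 1 Ny, (W i (j + 1) - 2 * W i j + W i (j - 1)) = 0 := fun i hi => by
    rw [sum_Icc_second_diff (W i ·), (hW.2 i hi).1, (hW.2 i hi).2]
    ring
  have hsum : ∑ i ∈ Icc 1 Nx, ∑ j ∈ Icc 1 Ny, lapH hx hy W i j = 0 := by
    simp only [lapH]
    rw [sum_congr rfl fun i _ => sum_add_distrib, sum_add_distrib, sum_comm,
      sum_eq_zero fun j hj => by rw [← sum_div, hxflux j hj, zero_div], zero_add]
    exact sum_eq_zero fun i hi => by rw [← sum_div, hyflux i hi, zero_div]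
  simp only [innerM, mul_one, ← mul_sum, hsum, mul_zero]

end innerM

theorem fully_discrete_mass_conservation_general
    (Nx Ny : ℕ)
    (hx hy : ℝ)
    (Δt M β : ℝ) (hΔt : 0 < Δt) (hβ : 0 < β)
    (Ψn Ψp Zn Zp W : ℕ → ℕ → ℝ)
    (hW : NeumannBC Nx Ny W)
    (heq1 : ∀ i ∈ Finset.Icc 1 Nx, ∀ j ∈ Finset.Icc 1 Ny,
      Ψp i j - Ψn i j + β * Δt * ((Ψp i j + Ψn i j) / 2) = M * Δt * lapH hx hy W i j)
    (heq2 : ∀ i ∈ Finset.Icc 1 Nx, ∀ j ∈ Finset.Icc 1 Ny,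
      Δt * ((Ψp i j + Ψn i j) / 2) = Zp i j - Zn i j) :
    (1 + β / 2 * Δt) * innerM Nx Ny hx hy Ψp (fun _ _ => 1) =
      (1 - β / 2 * Δt) * innerM Nx Ny hx hy Ψn (fun _ _ => 1) ∧
    (innerM Nx Ny hx hy Ψn (fun _ _ => 1) = 0 →
      innerM Nx Ny hx hy Ψp (fun _ _ => 1) = 0 ∧
      innerM Nx Ny hx hy Zp (fun _ _ => 1) = innerM Nx Ny hx hy Zn (fun _ _ => 1)) := by
  set mass := fun f => innerM Nx Ny hx hy f (fun _ _ => 1)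
  have hΨ : (1 + β / 2 * Δt) * mass Ψp - (1 - β / 2 * Δt) * mass Ψn = 0 := by
    rw [← innerM_const_mul_left, ← innerM_const_mul_left, ← innerM_sub_left,
      innerM_congr_left _ fun i hi j hj => (by rw [← heq1 i hi j hj]; ring :
        _ = M * Δt * lapH hx hy W i j),
      innerM_const_mul_left, innerM_lapH_one_eq_zero hW, mul_zero]
  have hZ : mass Zp - mass Zn = Δt / 2 * (mass Ψp + mass Ψn) := by
    rw [← innerM_sub_left, ← innerM_add_left, ← innerM_const_mul_left]
    exact innerM_congr_left _ fun i hi j hj => by rw [← heq2 i hi j hj]; ring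
  refine ⟨sub_eq_zero.mp hΨ, fun (hΨn : mass Ψn = 0) => ?_⟩
  have hΨp : mass Ψp = 0 := by
    rw [hΨn, mul_zero, sub_zero] at hΨ
    exact (mul_eq_zero.mp hΨ).resolve_left (by positivity)
  refine ⟨hΨp, sub_eq_zero.mp ?_⟩
  rw [hZ, hΨp, hΨn, add_zero, mul_zero]

/-- Theorem 3.1, mass conservation part (fully discrete scheme):
`(1 + (β/2)Δt)(Ψ^{n+1}, 1)_m = (1 - (β/2)Δt)(Ψ^n, 1)_m`; consequently, if
`(Ψ^n, 1)_m = 0` then `(Ψ^{n+1}, 1)_m = 0` and `(Z^{n+1}, 1)_m = (Z^n, 1)_m`. -/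
theorem fully_discrete_mass_conservation
    (Nx Ny : ℕ) (hNx : 1 ≤ Nx) (hNy : 1 ≤ Ny)
    (hx hy : ℝ) (hhx : 0 < hx) (hhy : 0 < hy)
    (Δt M β : ℝ) (hΔt : 0 < Δt) (hM : 0 < M) (hβ : 0 < β)
    (Ψn Ψp Zn Zp W : ℕ → ℕ → ℝ)
    (hW : NeumannBC Nx Ny W)
    (heq1 : ∀ i ∈ Finset.Icc 1 Nx, ∀ j ∈ Finset.Icc 1 Ny,
      Ψp i j - Ψn i j + β * Δt * ((Ψp i j + Ψn i j) / 2) = M * Δt * lapH hx hy W i j)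
    (heq2 : ∀ i ∈ Finset.Icc 1 Nx, ∀ j ∈ Finset.Icc 1 Ny,
      Δt * ((Ψp i j + Ψn i j) / 2) = Zp i j - Zn i j) :
    (1 + β / 2 * Δt) * innerM Nx Ny hx hy Ψp (fun _ _ => 1) =
      (1 - β / 2 * Δt) * innerM Nx Ny hx hy Ψn (fun _ _ => 1) ∧
    (innerM Nx Ny hx hy Ψn (fun _ _ => 1) = 0 →
      innerM Nx Ny hx hy Ψp (fun _ _ => 1) = 0 ∧
      innerM Nx Ny hx hy Zp (fun _ _ => 1) = innerM Nx Ny hx hy Zn (fun _ _ => 1)) :=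
  fully_discrete_mass_conservation_general Nx Ny hx hy Δt M β hΔt hβ Ψn Ψp Zn Zp W hW heq1 heq2
end

section
/- Discrete H^{-1} evolution identity (equation (3.31) in the energy stability proof): Let Δt > 0, M > 0, β > 0. Let Ψ^n, Ψ^{n+1} be grid functions, W^{n+1/2} a grid function satisfying the discrete Neumann BC, and suppose Ψ^{n+1} - Ψ^n + βΔt Ψ^{n+1/2} = MΔt Δ_h W^{n+1/2} at all interior cells, where Ψ^{n+1/2} = (Ψ^{n+1} + Ψ^n)/2. Suppose η^n, η^{n+1} are grid functions satisfying the discrete Neumann BC with -Δ_h η^k = Ψ^k at all interior cells for k ∈ {n, n+1}, and set η^{n+1/2} = (η^{n+1} + η^n)/2. Then (1/(2M))(‖∇_h η^{n+1}‖^2 - ‖∇_h η^n‖^2) = -(β/M) Δt ‖∇_h η^{n+1/2}‖^2 - Δt (W^{n+1/2}, Ψ^{n+1/2})_m. -/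
open Finset

/-!
Pair the scheme with the midpoint `η^{n+1/2}` and sum over the interior. Summation by parts
under the Neumann condition (the discrete Green identity `(-Δ_h g, f)_m = (∇_h g, ∇_h f)`)
turns the three terms into gradient pairings: the time difference gives
`(∇_h(η^{n+1} - ηⁿ), ∇_h η^{n+1/2}) = (‖∇_h η^{n+1}‖² - ‖∇_h ηⁿ‖²)/2`, the damping term gives
`β Δt ‖∇_h η^{n+1/2}‖²`, and moving `Δ_h` from `W` onto `η^{n+1/2}` gives `-M Δt (W, Ψ^{n+1/2})_m`.
-/

noncomputable def gradInner (Nx Ny : ℕ) (hx hy : ℝ) (f g : ℕ → ℕ → ℝ) : ℝ :=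
  innerX Nx Ny hx hy (dX hx f) (dX hx g) + innerY Nx Ny hx hy (dY hy f) (dY hy g)

theorem sum_Icc_neg_secondDiff_mul {R : Type*} [CommRing R] (a f : ℕ → R) (n : ℕ) :
    ∑ i ∈ Icc 1 (n + 1), (2 * a i - a (i + 1) - a (i - 1)) * f i =
      (a 1 - a 0) * f 1 - (a (n + 2) - a (n + 1)) * f (n + 1) +
        ∑ i ∈ Icc 1 n, (a (i + 1) - a i) * (f (i + 1) - f i) := by
  induction n with
  | zero => simp; ring
  | succ n ih =>
    rw [sum_Icc_succ_top (by omega), ih, sum_Icc_succ_top (by omega)]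
    simp only [Nat.add_sub_cancel]
    ring

theorem sum_Icc_neg_secondDiff_mul_of_neumann {R : Type*} [CommRing R] (a f : ℕ → R) (N : ℕ)
    (h0 : a 0 = a 1) (hN : a (N + 1) = a N) :
    ∑ i ∈ Icc 1 N, (2 * a i - a (i + 1) - a (i - 1)) * f i =
      ∑ i ∈ Icc 1 (N - 1), (a (i + 1) - a i) * (f (i + 1) - f i) := by
  cases N with
  | zero => simp
  | succ n => rw [sum_Icc_neg_secondDiff_mul, h0, hN]; simp

theorem NeumannBC.map₂ {Nx Ny : ℕ} {f g : ℕ → ℕ → ℝ} (hf : NeumannBC Nx Ny f)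
    (hg : NeumannBC Nx Ny g) (φ : ℝ → ℝ → ℝ) :
    NeumannBC Nx Ny (fun i j => φ (f i j) (g i j)) :=
  ⟨fun j hj => by simp only [(hf.1 j hj).1, (hf.1 j hj).2, (hg.1 j hj).1, (hg.1 j hj).2, and_self],
   fun i hi => by simp only [(hf.2 i hi).1, (hf.2 i hi).2, (hg.2 i hi).1, (hg.2 i hi).2, and_self]⟩

theorem NeumannBC.innerM_neg_lapH {Nx Ny : ℕ} {g : ℕ → ℕ → ℝ} (hg : NeumannBC Nx Ny g)
    (hx hy : ℝ) (f : ℕ → ℕ → ℝ) :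
    innerM Nx Ny hx hy (fun i j => -lapH hx hy g i j) f = gradInner Nx Ny hx hy g f := by
  have hrow : ∀ j ∈ Icc 1 Ny,
      ∑ i ∈ Icc 1 Nx, (2 * g i j - g (i + 1) j - g (i - 1) j) * f i j =
        ∑ i ∈ Icc 1 (Nx - 1), (g (i + 1) j - g i j) * (f (i + 1) j - f i j) := fun j hj =>
    sum_Icc_neg_secondDiff_mul_of_neumann _ _ Nx (hg.1 j hj).1 (hg.1 j hj).2
  have hcol : ∀ i ∈ Icc 1 Nx,
      ∑ j ∈ Icc 1 Ny, (2 * g i j - g i (j + 1) - g i (j - 1)) * f i j =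
        ∑ j ∈ Icc 1 (Ny - 1), (g i (j + 1) - g i j) * (f i (j + 1) - f i j) := fun i hi =>
    sum_Icc_neg_secondDiff_mul_of_neumann _ _ Ny (hg.2 i hi).1 (hg.2 i hi).2
  calc innerM Nx Ny hx hy (fun i j => -lapH hx hy g i j) f
      = hx * hy / hx ^ 2 * ∑ j ∈ Icc 1 Ny, ∑ i ∈ Icc 1 Nx,
            (2 * g i j - g (i + 1) j - g (i - 1) j) * f i j +
          hx * hy / hy ^ 2 * ∑ i ∈ Icc 1 Nx, ∑ j ∈ Icc 1 Ny,
            (2 * g i j - g i (j + 1) - g i (j - 1)) * f i j := by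
        rw [sum_comm]
        simp only [innerM, lapH, mul_sum, ← sum_add_distrib]
        exact sum_congr rfl fun i _ => sum_congr rfl fun j _ => by ring
    _ = hx * hy / hx ^ 2 * ∑ j ∈ Icc 1 Ny, ∑ i ∈ Icc 1 (Nx - 1),
            (g (i + 1) j - g i j) * (f (i + 1) j - f i j) +
          hx * hy / hy ^ 2 * ∑ i ∈ Icc 1 Nx, ∑ j ∈ Icc 1 (Ny - 1),
            (g i (j + 1) - g i j) * (f i (j + 1) - f i j) := by
        rw [sum_congr rfl hrow, sum_congr rfl hcol]
    _ = gradInner Nx Ny hx hy g f := by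
        rw [sum_comm]
        simp only [gradInner, innerX, innerY, dX, dY, mul_sum]
        congr 1 <;> exact sum_congr rfl fun i _ => sum_congr rfl fun j _ => by ring

theorem gradInner_comm (Nx Ny : ℕ) (hx hy : ℝ) (f g : ℕ → ℕ → ℝ) :
    gradInner Nx Ny hx hy f g = gradInner Nx Ny hx hy g f := by
  simp only [gradInner, innerX, innerY]
  congr 1 <;> exact sum_congr rfl fun i _ => sum_congr rfl fun j _ => by ring

theorem gradInner_sub_midpoint (Nx Ny : ℕ) (hx hy : ℝ) (f g : ℕ → ℕ → ℝ) :
    gradInner Nx Ny hx hy (fun i j => f i j - g i j) (fun i j => (f i j + g i j) / 2) =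
      (gradSq Nx Ny hx hy f - gradSq Nx Ny hx hy g) / 2 := by
  simp only [gradInner, gradSq, innerX, innerY, dX, dY, add_sub_add_comm, add_div,
    ← sum_sub_distrib, sum_div]
  congr 1 <;> exact sum_congr rfl fun i _ => sum_congr rfl fun j _ => by ring

theorem innerM_comm (Nx Ny : ℕ) (hx hy : ℝ) (f g : ℕ → ℕ → ℝ) :
    innerM Nx Ny hx hy f g = innerM Nx Ny hx hy g f :=
  sum_congr rfl fun i _ => sum_congr rfl fun j _ => by ring

theorem innerM_neg_left (Nx Ny : ℕ) (hx hy : ℝ) (f g : ℕ → ℕ → ℝ) :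
    innerM Nx Ny hx hy (fun i j => -f i j) g = -innerM Nx Ny hx hy f g := by
  simp only [innerM, mul_neg, neg_mul, sum_neg_distrib]

theorem NeumannBC.innerM_eq_gradInner {Nx Ny : ℕ} {hx hy : ℝ} {g Ψ : ℕ → ℕ → ℝ}
    (hg : NeumannBC Nx Ny g) (hΨ : ∀ i ∈ Icc 1 Nx, ∀ j ∈ Icc 1 Ny, -lapH hx hy g i j = Ψ i j)
    (f : ℕ → ℕ → ℝ) : innerM Nx Ny hx hy Ψ f = gradInner Nx Ny hx hy g f := by
  rw [← hg.innerM_neg_lapH hx hy f]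
  exact sum_congr rfl fun i hi => sum_congr rfl fun j hj => by rw [← hΨ i hi j hj]

theorem discrete_Hminus1_evolution_general
    (Nx Ny : ℕ)
    (hx hy : ℝ)
    (Δt M β : ℝ) (hM : 0 < M)
    (Ψn Ψp W ηn ηp : ℕ → ℕ → ℝ)
    (hW : NeumannBC Nx Ny W)
    (heq : ∀ i ∈ Finset.Icc 1 Nx, ∀ j ∈ Finset.Icc 1 Ny,
      Ψp i j - Ψn i j + β * Δt * ((Ψp i j + Ψn i j) / 2) = M * Δt * lapH hx hy W i j)
    (hηn : NeumannBC Nx Ny ηn) (hηp : NeumannBC Nx Ny ηp)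
    (hηΨn : ∀ i ∈ Finset.Icc 1 Nx, ∀ j ∈ Finset.Icc 1 Ny, -lapH hx hy ηn i j = Ψn i j)
    (hηΨp : ∀ i ∈ Finset.Icc 1 Nx, ∀ j ∈ Finset.Icc 1 Ny, -lapH hx hy ηp i j = Ψp i j) :
    1 / (2 * M) * (gradSq Nx Ny hx hy ηp - gradSq Nx Ny hx hy ηn) =
      -(β / M) * Δt * gradSq Nx Ny hx hy (fun i j => (ηp i j + ηn i j) / 2)
      - Δt * innerM Nx Ny hx hy W (fun i j => (Ψp i j + Ψn i j) / 2) := by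
  set η₂ : ℕ → ℕ → ℝ := fun i j => (ηp i j + ηn i j) / 2
  set Ψ₂ : ℕ → ℕ → ℝ := fun i j => (Ψp i j + Ψn i j) / 2
  have hη₂ : NeumannBC Nx Ny η₂ := hηp.map₂ hηn fun a b => (a + b) / 2
  have hΨ₂ : ∀ i ∈ Icc 1 Nx, ∀ j ∈ Icc 1 Ny, -lapH hx hy η₂ i j = Ψ₂ i j := by
    intro i hi j hj
    have hp := hηΨp i hi j hj
    have hn := hηΨn i hi j hj
    simp only [η₂, Ψ₂, lapH] at hp hn ⊢
    linear_combination (hp + hn) / 2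
  have hδΨ : ∀ i ∈ Icc 1 Nx, ∀ j ∈ Icc 1 Ny,
      -lapH hx hy (fun i j => ηp i j - ηn i j) i j = Ψp i j - Ψn i j := by
    intro i hi j hj
    have hp := hηΨp i hi j hj
    have hn := hηΨn i hi j hj
    simp only [lapH] at hp hn ⊢
    linear_combination hp - hn
  have hscheme : innerM Nx Ny hx hy (fun i j => Ψp i j - Ψn i j) η₂ +
      β * Δt * innerM Nx Ny hx hy Ψ₂ η₂ = M * Δt * innerM Nx Ny hx hy (lapH hx hy W) η₂ := by
    simp only [innerM, mul_sum, ← sum_add_distrib]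
    exact sum_congr rfl fun i hi => sum_congr rfl fun j hj => by
      linear_combination hx * hy * η₂ i j * heq i hi j hj
  have htime : innerM Nx Ny hx hy (fun i j => Ψp i j - Ψn i j) η₂ =
      (gradSq Nx Ny hx hy ηp - gradSq Nx Ny hx hy ηn) / 2 := by
    rw [(hηp.map₂ hηn fun a b => a - b).innerM_eq_gradInner hδΨ, gradInner_sub_midpoint]
  have hdamp : innerM Nx Ny hx hy Ψ₂ η₂ = gradSq Nx Ny hx hy η₂ := hη₂.innerM_eq_gradInner hΨ₂ η₂
  have hchem : innerM Nx Ny hx hy (lapH hx hy W) η₂ = -innerM Nx Ny hx hy W Ψ₂ := by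
    rw [innerM_comm Nx Ny hx hy W, hη₂.innerM_eq_gradInner hΨ₂, gradInner_comm,
      ← hW.innerM_neg_lapH, innerM_neg_left, neg_neg]
  rw [htime, hdamp, hchem] at hscheme
  field_simp
  linear_combination 2 * hscheme

/-- Discrete `H⁻¹` evolution identity (equation (3.31)):
`(1/(2M))(‖∇_h η^{n+1}‖² - ‖∇_h ηⁿ‖²) = -(β/M) Δt ‖∇_h η^{n+1/2}‖²
  - Δt (W^{n+1/2}, Ψ^{n+1/2})_m`. -/
theorem discrete_Hminus1_evolution
    (Nx Ny : ℕ) (hNx : 1 ≤ Nx) (hNy : 1 ≤ Ny)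
    (hx hy : ℝ) (hhx : 0 < hx) (hhy : 0 < hy)
    (Δt M β : ℝ) (hΔt : 0 < Δt) (hM : 0 < M) (hβ : 0 < β)
    (Ψn Ψp W ηn ηp : ℕ → ℕ → ℝ)
    (hW : NeumannBC Nx Ny W)
    (heq : ∀ i ∈ Finset.Icc 1 Nx, ∀ j ∈ Finset.Icc 1 Ny,
      Ψp i j - Ψn i j + β * Δt * ((Ψp i j + Ψn i j) / 2) = M * Δt * lapH hx hy W i j)
    (hηn : NeumannBC Nx Ny ηn) (hηp : NeumannBC Nx Ny ηp)
    (hηΨn : ∀ i ∈ Finset.Icc 1 Nx, ∀ j ∈ Finset.Icc 1 Ny, -lapH hx hy ηn i j = Ψn i j)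
    (hηΨp : ∀ i ∈ Finset.Icc 1 Nx, ∀ j ∈ Finset.Icc 1 Ny, -lapH hx hy ηp i j = Ψp i j) :
    1 / (2 * M) * (gradSq Nx Ny hx hy ηp - gradSq Nx Ny hx hy ηn) =
      -(β / M) * Δt * gradSq Nx Ny hx hy (fun i j => (ηp i j + ηn i j) / 2)
      - Δt * innerM Nx Ny hx hy W (fun i j => (Ψp i j + Ψn i j) / 2) :=
  discrete_Hminus1_evolution_general Nx Ny hx hy Δt M β hM Ψn Ψp W ηn ηp hW heq hηn hηp hηΨn hηΨp
end
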